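/- arXiv:1905.06171 — 4 statements merged into one kernel-verified Lean document; each statement's English description precedes it below -/
import Mathlib

section
/- For every natural number n and all real x and t, Σ_{r=0}^∞ ω_{n,r}(x) t^r/r! = e^t Σ_{k=0}^n ( Σ_{j=0}^k S(n,k) L(k,j) t^j ) x^k, where r runs over nonnegative integers. -/
open Finset MeasureTheory Real

/-- Stirling numbers of the second kind. -/
def stirling2 : ℕ → ℕ → ℕ
  | 0, 0 => 1
  | 0, _ + 1 => 0
  | _ + 1, 0 => 0
  | n + 1, k + 1 => (k + 1) * stirling2 n (k + 1) + stirling2 n k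

/-- The generalized geometric polynomials `ω_{n,r}(x) = Σ_{k=0}^n S(n,k) (r)_k x^k`,
where `(r)_k` is the rising factorial (Pochhammer symbol). -/
noncomputable def geomPoly (n : ℕ) (r x : ℝ) : ℝ :=
  ∑ k ∈ Finset.range (n + 1), (stirling2 n k : ℝ) * (ascPochhammer ℝ k).eval r * x ^ k

/-- The exponential polynomials `φ_n(x) = Σ_{k=0}^n S(n,k) x^k`. -/
noncomputable def expPoly (n : ℕ) (x : ℝ) : ℝ :=
  ∑ k ∈ Finset.range (n + 1), (stirling2 n k : ℝ) * x ^ k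
/-- The (unsigned) Lah numbers: `L(n,k) = (n!/k!) C(n-1,k-1)` for `n, k ≥ 1`,
`L(0,0) = 1`, `L(n,0) = 0` for `n ≥ 1` (and `L(n,k) = 0` for `k > n`). -/
def lah : ℕ → ℕ → ℕ
  | 0, 0 => 1
  | 0, _ + 1 => 0
  | _ + 1, 0 => 0
  | n + 1, k + 1 => (n + 1).factorial / (k + 1).factorial * Nat.choose n k

open Polynomial

/-! Rising factorials expand in falling factorials with Lah coefficients,
`(r)_k = Σ_j L(k,j) r(r-1)⋯(r-j+1)`, which follows by induction on `k` from the recurrence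
`L(k+1,j+1) = L(k,j) + (k+j+1) L(k,j+1)`. Against `t^r / r!` the falling factorial of degree `j`
only shifts the exponential series by `j`, so `Σ_r r(r-1)⋯(r-j+1) t^r / r! = t^j e^t`; summing
these finitely many series with the coefficients `S(n,k) x^k L(k,j)` gives the theorem. -/

theorem factorial_mul_lah_succ_succ (n k : ℕ) :
    (k + 1).factorial * lah (n + 1) (k + 1) = (n + 1).factorial * n.choose k := by
  rcases le_or_gt k n with hkn | hnk
  · rw [lah, ← mul_assoc, Nat.mul_div_cancel' (Nat.factorial_dvd_factorial (by omega))]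
  · simp [lah, Nat.choose_eq_zero_of_lt hnk]

theorem lah_eq_zero_of_lt {n k : ℕ} (h : n < k) : lah n k = 0 := by
  obtain _ | k := k
  · omega
  obtain _ | n := n
  · rfl
  · simp [lah, Nat.choose_eq_zero_of_lt (Nat.succ_lt_succ_iff.mp h)]

theorem add_two_mul_choose_succ_succ (n k : ℕ) :
    (n + 2) * (n + 1).choose (k + 1)
      = (k + 2) * n.choose k + (n + k + 3) * n.choose (k + 1) := by
  rcases le_or_gt k n with hkn | hnk
  · have pascal : ((n + 1).choose (k + 1) : ℤ) = n.choose k + n.choose (k + 1) := by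
      exact_mod_cast Nat.choose_succ_succ n k
    have absorb := Nat.choose_succ_right_eq n k
    zify [hkn] at absorb ⊢
    linear_combination ((n : ℤ) + 2) * pascal - absorb
  · simp [Nat.choose_eq_zero_of_lt, hnk, Nat.lt_succ_of_lt hnk]

theorem lah_succ_succ (n k : ℕ) :
    lah (n + 1) (k + 1) = lah n k + (n + k + 1) * lah n (k + 1) := by
  obtain _ | n := n
  · obtain _ | k := k
    · rfl
    · simp [lah_eq_zero_of_lt]
  obtain _ | k := k
  · simp [lah, Nat.factorial_succ (n + 1)]
  -- multiplied by `(k + 2)!`, this is `add_two_mul_choose_succ_succ` scaled by `(n + 1)!`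
  apply Nat.eq_of_mul_eq_mul_left (Nat.factorial_pos (k + 2))
  have h₁ := factorial_mul_lah_succ_succ n k
  have h₂ := factorial_mul_lah_succ_succ n (k + 1)
  have h₃ := factorial_mul_lah_succ_succ (n + 1) (k + 1)
  have h₄ := add_two_mul_choose_succ_succ n k
  rw [Nat.factorial_succ (k + 1)] at h₂ h₃ ⊢
  rw [Nat.factorial_succ (n + 1)] at h₃
  zify at h₁ h₂ h₃ h₄ ⊢
  linear_combination h₃ - ((k : ℤ) + 2) * h₁ - ((n : ℤ) + k + 3) * h₂
    + ((n + 1).factorial : ℤ) * h₄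

theorem descPochhammer_mul_X_add_natCast (R : Type*) [Ring R] (j n : ℕ) :
    descPochhammer R j * (X + (n : R[X]))
      = descPochhammer R (j + 1) + (n + j) • descPochhammer R j := by
  rw [descPochhammer_succ_right, add_smul, nsmul_eq_mul, nsmul_eq_mul, Nat.cast_comm,
    Nat.cast_comm]
  simp only [mul_add, mul_sub]
  abel

theorem ascPochhammer_eq_sum_lah_smul_descPochhammer (R : Type*) [Ring R] (n : ℕ) :
    ascPochhammer R n = ∑ k ∈ range (n + 1), lah n k • descPochhammer R k := by
  induction n with
  | zero => simp [lah]
  | succ n ih =>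
    set f : ℕ → R[X] := fun k ↦ lah n k • (n + k) • descPochhammer R k
    have hf_zero : f 0 = 0 := by
      obtain _ | n := n <;> simp [f, lah]
    have hf_top : f (n + 1) = 0 := by simp [f, lah_eq_zero_of_lt]
    have shift : ∑ k ∈ range (n + 1), f k = ∑ k ∈ range (n + 1), f (k + 1) := by
      rw [sum_range_succ', hf_zero, sum_range_succ _ n, hf_top]
    calc ascPochhammer R (n + 1)
        = ∑ k ∈ range (n + 1), lah n k • descPochhammer R (k + 1)
            + ∑ k ∈ range (n + 1), f k := by
          simp only [ascPochhammer_succ_right, ih, sum_mul, smul_mul_assoc,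
            descPochhammer_mul_X_add_natCast, smul_add, sum_add_distrib, f]
      _ = ∑ k ∈ range (n + 1), lah (n + 1) (k + 1) • descPochhammer R (k + 1) := by
          rw [shift, ← sum_add_distrib]
          refine sum_congr rfl fun k _ ↦ ?_
          simp only [f, lah_succ_succ]
          module
      _ = ∑ k ∈ range (n + 2), lah (n + 1) k • descPochhammer R k := by
          simp [sum_range_succ' _ (n + 1), lah]

theorem ascPochhammer_eval_natCast_eq_sum_lah_mul_descFactorial (R : Type*) [Ring R] (n r : ℕ) :
    (ascPochhammer R n).eval (r : R) = ∑ k ∈ range (n + 1), (lah n k : R) * r.descFactorial k := by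
  simp [ascPochhammer_eq_sum_lah_smul_descPochhammer, eval_finsetSum,
    descPochhammer_eval_eq_descFactorial]

theorem hasSum_descFactorial_mul_pow_div_factorial (j : ℕ) (t : ℝ) :
    HasSum (fun r : ℕ ↦ (r.descFactorial j : ℝ) * t ^ r / r.factorial) (t ^ j * exp t) := by
  have shifted : (fun m : ℕ ↦ ((m + j).descFactorial j : ℝ) * t ^ (m + j) / (m + j).factorial)
      = fun m ↦ t ^ j * (t ^ m / m.factorial) := by
    funext m
    have h := Nat.factorial_mul_descFactorial (Nat.le_add_left j m)
    rw [Nat.add_sub_cancel] at h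
    rw [← h, Nat.cast_mul, pow_add]
    field_simp
  have vanish : ∀ r ∉ Set.range (· + j), (r.descFactorial j : ℝ) * t ^ r / r.factorial = 0 := by
    intro r hr
    have : r < j := by
      by_contra! hjr
      exact hr ⟨r - j, Nat.sub_add_cancel hjr⟩
    simp [Nat.descFactorial_eq_zero_iff_lt.mpr this]
  rw [← (add_left_injective j).hasSum_iff vanish, Function.comp_def, shifted]
  exact (Real.exp_eq_exp_ℝ ▸ NormedSpace.expSeries_div_hasSum_exp t).mul_left _

theorem hasSum_ascPochhammer_eval_mul_pow_div_factorial (n : ℕ) (t : ℝ) :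
    HasSum (fun r : ℕ ↦ (ascPochhammer ℝ n).eval (r : ℝ) * t ^ r / r.factorial)
      (exp t * ∑ k ∈ range (n + 1), (lah n k : ℝ) * t ^ k) := by
  have value : exp t * ∑ k ∈ range (n + 1), (lah n k : ℝ) * t ^ k
      = ∑ k ∈ range (n + 1), (lah n k : ℝ) * (t ^ k * exp t) := by
    rw [mul_sum]
    exact sum_congr rfl fun k _ ↦ by ring
  rw [value]
  refine (hasSum_sum fun k _ ↦
    (hasSum_descFactorial_mul_pow_div_factorial k t).mul_left (lah n k : ℝ)).congr_fun fun r ↦ ?_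
  rw [ascPochhammer_eval_natCast_eq_sum_lah_mul_descFactorial, sum_mul, sum_div]
  exact sum_congr rfl fun k _ ↦ by ring

/-- For every natural `n` and all real `x`, `t`,
`Σ_{r=0}^∞ ω_{n,r}(x) t^r/r! = e^t Σ_{k=0}^n (Σ_{j=0}^k S(n,k) L(k,j) t^j) x^k`. -/
theorem geomPoly_egf_in_r_lah (n : ℕ) (x t : ℝ) :
    HasSum (fun r : ℕ => geomPoly n (r : ℝ) x * t ^ r / r.factorial)
      (Real.exp t * ∑ k ∈ Finset.range (n + 1),
        (∑ j ∈ Finset.range (k + 1), (stirling2 n k : ℝ) * (lah k j : ℝ) * t ^ j) * x ^ k) := by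
  have value : exp t * ∑ k ∈ range (n + 1),
        (∑ j ∈ range (k + 1), (stirling2 n k : ℝ) * (lah k j : ℝ) * t ^ j) * x ^ k
      = ∑ k ∈ range (n + 1),
        (stirling2 n k : ℝ) * x ^ k * (exp t * ∑ j ∈ range (k + 1), (lah k j : ℝ) * t ^ j) := by
    simp only [mul_sum, sum_mul]
    exact sum_congr rfl fun k _ ↦ sum_congr rfl fun j _ ↦ by ring
  rw [value]
  refine (hasSum_sum fun k _ ↦ (hasSum_ascPochhammer_eval_mul_pow_div_factorial k t).mul_left
    ((stirling2 n k : ℝ) * x ^ k)).congr_fun fun r ↦ ?_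
  rw [geomPoly, sum_mul, sum_div]
  exact sum_congr rfl fun k _ ↦ by ring
end

section
/- For all natural numbers n and m, every real r > 0, and every real x, ω_{n+m,r}(x) = Σ_{k=0}^n Σ_{j=0}^m C(n,k) S(m,j) (r)_j j^{n-k} x^j ω_{k,r+j}(x) (with the convention 0^0 = 1). -/
open Finset MeasureTheory Real

lemma poch_left (k : ℕ) (r : ℝ) :
    (ascPochhammer ℝ (k+1)).eval r = r * (ascPochhammer ℝ k).eval (r+1) := by
  simp [ascPochhammer_succ_left, Polynomial.eval_comp]

lemma stirling2_eq_zero : ∀ n k : ℕ, n < k → stirling2 n k = 0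
  | 0, k+1, _ => rfl
  | n+1, k+1, h => by
    rw [stirling2, stirling2_eq_zero n (k+1) (by omega), stirling2_eq_zero n k (by omega)]
    ring

lemma geomPoly_succ (n : ℕ) (r x : ℝ) :
    geomPoly (n+1) r x = r * (1+x) * geomPoly n (r+1) x - r * geomPoly n r x := by
  unfold geomPoly
  rw [Finset.sum_range_succ']
  have h0 : (stirling2 (n+1) 0 : ℝ) * (ascPochhammer ℝ 0).eval r * x ^ 0 = 0 := by
    simp [stirling2]
  rw [h0, add_zero]
  have hsplit : ∀ k ∈ Finset.range (n+1),
      (stirling2 (n+1) (k+1) : ℝ) * (ascPochhammer ℝ (k+1)).eval r * x ^ (k+1)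
      = ((k:ℝ)+1) * (stirling2 n (k+1) : ℝ) * (ascPochhammer ℝ (k+1)).eval r * x ^ (k+1)
        + (stirling2 n k : ℝ) * (ascPochhammer ℝ (k+1)).eval r * x ^ (k+1) := by
    intro k _
    rw [show stirling2 (n+1) (k+1) = (k+1) * stirling2 n (k+1) + stirling2 n k from rfl]
    push_cast
    ring
  rw [Finset.sum_congr rfl hsplit, Finset.sum_add_distrib]
  have hA : ∑ k ∈ Finset.range (n+1),
      ((k:ℝ)+1) * (stirling2 n (k+1) : ℝ) * (ascPochhammer ℝ (k+1)).eval r * x ^ (k+1)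
      = ∑ k ∈ Finset.range (n+1), (k:ℝ) * (stirling2 n k : ℝ) * (ascPochhammer ℝ k).eval r * x ^ k := by
    rw [Finset.sum_range_succ' (fun k => (k:ℝ) * (stirling2 n k : ℝ) * (ascPochhammer ℝ k).eval r * x ^ k) n]
    push_cast
    rw [Finset.sum_range_succ]
    rw [stirling2_eq_zero n (n+1) (by omega)]
    simp
  rw [hA]
  rw [Finset.mul_sum, Finset.mul_sum, ← Finset.sum_sub_distrib, ← Finset.sum_add_distrib]
  refine Finset.sum_congr rfl fun k hk => ?_
  have h1 := poch_left k r
  have h2 := ascPochhammer_succ_eval (S := ℝ) k r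
  have key : r * (ascPochhammer ℝ k).eval (r+1) = (ascPochhammer ℝ k).eval r * (r + k) := by
    rw [← h1, h2]
  rw [h1]
  linear_combination (-(stirling2 n k : ℝ) * x ^ k) * key

/-- For all naturals `n`, `m`, real `r > 0`, and real `x`,
`ω_{n+m,r}(x) = Σ_{k=0}^n Σ_{j=0}^m C(n,k) S(m,j) (r)_j j^{n-k} x^j ω_{k,r+j}(x)`
(with `0^0 = 1`). -/
theorem geomPoly_add_index (n m : ℕ) (r : ℝ) (hr : 0 < r) (x : ℝ) :
    geomPoly (n + m) r x =
      ∑ k ∈ Finset.range (n + 1), ∑ j ∈ Finset.range (m + 1),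
        (Nat.choose n k : ℝ) * (stirling2 m j : ℝ) * (ascPochhammer ℝ j).eval r *
          (j : ℝ) ^ (n - k) * x ^ j * geomPoly k (r + j) x := by
  clear hr
  induction n generalizing r with
  | zero =>
    rw [Nat.zero_add, Finset.sum_range_one]
    have hc : ∀ j ∈ Finset.range (m + 1),
        (Nat.choose 0 0 : ℝ) * (stirling2 m j : ℝ) * (ascPochhammer ℝ j).eval r *
          (j : ℝ) ^ (0 - 0) * x ^ j * geomPoly 0 (r + j) x
        = (stirling2 m j : ℝ) * (ascPochhammer ℝ j).eval r * x ^ j := by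
      intro j hj
      have h0 : geomPoly 0 (r + j) x = 1 := by
        simp [geomPoly, stirling2]
      rw [h0]
      simp
    rw [Finset.sum_congr rfl hc]
    rfl
  | succ n ih =>
    rw [show n + 1 + m = (n + m) + 1 by omega, geomPoly_succ, ih (r+1), ih r]
    have lhs_eq : r * (1+x) *
        (∑ k ∈ Finset.range (n + 1), ∑ j ∈ Finset.range (m + 1),
          (Nat.choose n k : ℝ) * (stirling2 m j : ℝ) * (ascPochhammer ℝ j).eval (r+1) *
            (j : ℝ) ^ (n - k) * x ^ j * geomPoly k (r + 1 + j) x)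
        - r * (∑ k ∈ Finset.range (n + 1), ∑ j ∈ Finset.range (m + 1),
          (Nat.choose n k : ℝ) * (stirling2 m j : ℝ) * (ascPochhammer ℝ j).eval r *
            (j : ℝ) ^ (n - k) * x ^ j * geomPoly k (r + j) x)
        = ∑ k ∈ Finset.range (n + 1), ∑ j ∈ Finset.range (m + 1),
          ((Nat.choose n k : ℝ) * (stirling2 m j : ℝ) * (ascPochhammer ℝ j).eval r *
            (j : ℝ) ^ (n - k) * x ^ j * geomPoly (k+1) (r + j) x
          + (Nat.choose n k : ℝ) * (stirling2 m j : ℝ) * (ascPochhammer ℝ j).eval r *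
            (j : ℝ) ^ (n - k) * (j : ℝ) * x ^ j * geomPoly k (r + j) x) := by
      rw [Finset.mul_sum, Finset.mul_sum, ← Finset.sum_sub_distrib]
      refine Finset.sum_congr rfl fun k hk => ?_
      rw [Finset.mul_sum, Finset.mul_sum, ← Finset.sum_sub_distrib]
      refine Finset.sum_congr rfl fun j hj => ?_
      have key : r * (ascPochhammer ℝ j).eval (r+1) = (ascPochhammer ℝ j).eval r * (r + j) := by
        rw [← poch_left, ascPochhammer_succ_eval]
      have hs := geomPoly_succ k (r + j) x
      rw [show r + 1 + (j:ℝ) = r + j + 1 by ring]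
      linear_combination
        ((Nat.choose n k : ℝ) * (stirling2 m j : ℝ) * (j : ℝ) ^ (n - k) * x ^ j * (1+x) *
          geomPoly k (r + j + 1) x) * key
        - ((Nat.choose n k : ℝ) * (stirling2 m j : ℝ) * (j : ℝ) ^ (n - k) * x ^ j *
          (ascPochhammer ℝ j).eval r) * hs
    rw [lhs_eq]
    simp only [Finset.sum_add_distrib]
    rw [Finset.sum_range_succ' (fun k => ∑ j ∈ Finset.range (m + 1),
        (Nat.choose (n+1) k : ℝ) * (stirling2 m j : ℝ) * (ascPochhammer ℝ j).eval r *
          (j : ℝ) ^ (n + 1 - k) * x ^ j * geomPoly k (r + j) x) (n+1)]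
    have e1 : ∑ k ∈ Finset.range (n + 1), ∑ j ∈ Finset.range (m + 1),
        (Nat.choose (n+1) (k+1) : ℝ) * (stirling2 m j : ℝ) * (ascPochhammer ℝ j).eval r *
          (j : ℝ) ^ (n + 1 - (k+1)) * x ^ j * geomPoly (k+1) (r + j) x
        = (∑ k ∈ Finset.range (n + 1), ∑ j ∈ Finset.range (m + 1),
            (Nat.choose n k : ℝ) * (stirling2 m j : ℝ) * (ascPochhammer ℝ j).eval r *
              (j : ℝ) ^ (n - k) * x ^ j * geomPoly (k+1) (r + j) x)
          + (∑ k ∈ Finset.range (n + 1), ∑ j ∈ Finset.range (m + 1),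
            (Nat.choose n (k+1) : ℝ) * (stirling2 m j : ℝ) * (ascPochhammer ℝ j).eval r *
              (j : ℝ) ^ (n - k) * x ^ j * geomPoly (k+1) (r + j) x) := by
      rw [← Finset.sum_add_distrib]
      refine Finset.sum_congr rfl fun k hk => ?_
      rw [← Finset.sum_add_distrib]
      refine Finset.sum_congr rfl fun j hj => ?_
      rw [Nat.succ_sub_succ, Nat.choose_succ_succ]
      push_cast
      ring
    have e2 : ∑ k ∈ Finset.range (n + 1), ∑ j ∈ Finset.range (m + 1),
        (Nat.choose n k : ℝ) * (stirling2 m j : ℝ) * (ascPochhammer ℝ j).eval r *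
          (j : ℝ) ^ (n - k) * (j : ℝ) * x ^ j * geomPoly k (r + j) x
        = (∑ k ∈ Finset.range (n + 1), ∑ j ∈ Finset.range (m + 1),
            (Nat.choose n (k+1) : ℝ) * (stirling2 m j : ℝ) * (ascPochhammer ℝ j).eval r *
              (j : ℝ) ^ (n - k) * x ^ j * geomPoly (k+1) (r + j) x)
          + (∑ j ∈ Finset.range (m + 1),
            (Nat.choose (n+1) 0 : ℝ) * (stirling2 m j : ℝ) * (ascPochhammer ℝ j).eval r *
              (j : ℝ) ^ (n + 1 - 0) * x ^ j * geomPoly 0 (r + j) x) := by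
      rw [Finset.sum_range_succ' (fun k => ∑ j ∈ Finset.range (m + 1),
        (Nat.choose n k : ℝ) * (stirling2 m j : ℝ) * (ascPochhammer ℝ j).eval r *
          (j : ℝ) ^ (n - k) * (j : ℝ) * x ^ j * geomPoly k (r + j) x) n]
      congr 1
      · rw [Finset.sum_range_succ, show (Nat.choose n (n+1) : ℝ) = 0 by
          rw [Nat.choose_eq_zero_of_lt (by omega)]; simp]
        simp only [zero_mul, Finset.sum_const_zero, add_zero]
        refine Finset.sum_congr rfl fun k hk => ?_
        refine Finset.sum_congr rfl fun j hj => ?_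
        have hk' : k < n := Finset.mem_range.mp hk
        rw [show n - k = n - (k+1) + 1 by omega, pow_succ]
        ring
      · refine Finset.sum_congr rfl fun j hj => ?_
        rw [show n + 1 - 0 = (n - 0) + 1 by omega, pow_succ]
        simp only [Nat.choose_zero_right, Nat.cast_one]
        ring
    rw [e1, e2]
    ring
end

section
/- For every real r > 0, every natural number n, and every real x, the two recurrences ω_{n+1,r}(x) = r((x+1)·ω_{n,r+1}(x) − ω_{n,r}(x)) and ω_{n+1,r}(x) = (x² + x)·ω_{n,r}'(x) + r·x·ω_{n,r}(x) hold, where ω_{n,r}' denotes the derivative with respect to x. In particular, for r = 1, ω_{n+1}(x) = (x² + x)·ω_n'(x) + x·ω_n(x). -/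
open Finset MeasureTheory Real

theorem stirling2_eq_stirlingSecond : ∀ n k, stirling2 n k = Nat.stirlingSecond n k
  | 0, 0 | 0, _ + 1 | _ + 1, 0 => rfl
  | n + 1, k + 1 => by
    rw [stirling2, Nat.stirlingSecond_succ_succ, stirling2_eq_stirlingSecond n (k + 1),
      stirling2_eq_stirlingSecond n k]

theorem stirling2_eq_zero_of_lt {n k : ℕ} (h : n < k) : stirling2 n k = 0 := by
  rw [stirling2_eq_stirlingSecond, Nat.stirlingSecond_eq_zero_of_lt h]

theorem sum_stirling2_succ_mul {R : Type*} [CommSemiring R] (n : ℕ) (c : ℕ → R) :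
    ∑ k ∈ range (n + 2), (stirling2 (n + 1) k : R) * c k =
      ∑ k ∈ range (n + 1), (stirling2 n k : R) * (k * c k + c (k + 1)) := by
  have hsucc (k : ℕ) : (stirling2 (n + 1) (k + 1) : R) =
      (k + 1) * stirling2 n (k + 1) + stirling2 n k := by
    push_cast [stirling2]
    rfl
  have hshift : ∑ k ∈ range (n + 1), ((k : R) + 1) * stirling2 n (k + 1) * c (k + 1) =
      ∑ k ∈ range (n + 1), (k : R) * stirling2 n k * c k := by
    have h := sum_range_succ' (fun k => (k : R) * stirling2 n k * c k) (n + 1)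
    rw [sum_range_succ, stirling2_eq_zero_of_lt n.lt_succ_self] at h
    simpa using h.symm
  rw [sum_range_succ', stirling2, Nat.cast_zero, zero_mul, add_zero]
  simp_rw [hsucc, add_mul _ _ (c _)]
  rw [sum_add_distrib, hshift, ← sum_add_distrib]
  refine sum_congr rfl fun k _ => ?_
  ring

theorem ascPochhammer_eval_succ_left {S : Type*} [CommSemiring S] (k : ℕ) (r : S) :
    (ascPochhammer S (k + 1)).eval r = r * (ascPochhammer S k).eval (r + 1) := by
  simp [ascPochhammer_succ_left, Polynomial.eval_comp]

theorem geomPoly_succ_eq_sum (n : ℕ) (r x : ℝ) :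
    geomPoly (n + 1) r x = ∑ k ∈ range (n + 1), (stirling2 n k : ℝ) *
      (k * ((ascPochhammer ℝ k).eval r * x ^ k) +
        (ascPochhammer ℝ (k + 1)).eval r * x ^ (k + 1)) := by
  rw [geomPoly, ← sum_stirling2_succ_mul]
  simp only [mul_assoc]

theorem hasDerivAt_geomPoly (n : ℕ) (r x : ℝ) :
    HasDerivAt (geomPoly n r)
      (∑ k ∈ range (n + 1),
        (stirling2 n k : ℝ) * (ascPochhammer ℝ k).eval r * (k * x ^ (k - 1))) x :=
  HasDerivAt.fun_sum fun k _ => (hasDerivAt_pow k x).const_mul _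

theorem mul_deriv_geomPoly (n : ℕ) (r x : ℝ) :
    x * deriv (geomPoly n r) x =
      ∑ k ∈ range (n + 1),
        (stirling2 n k : ℝ) * (k * ((ascPochhammer ℝ k).eval r * x ^ k)) := by
  rw [(hasDerivAt_geomPoly n r x).deriv, mul_sum]
  refine sum_congr rfl fun k _ => ?_
  rcases k with _ | k
  · simp
  · rw [Nat.add_sub_cancel, pow_succ]
    ring

theorem geomPoly_succ_eq_shift (n : ℕ) (r x : ℝ) :
    geomPoly (n + 1) r x = r * ((x + 1) * geomPoly n (r + 1) x - geomPoly n r x) := by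
  rw [geomPoly_succ_eq_sum, geomPoly, geomPoly, mul_sum, ← sum_sub_distrib, mul_sum]
  refine sum_congr rfl fun k _ => ?_
  have h := ascPochhammer_succ_eval k r
  rw [ascPochhammer_eval_succ_left] at h ⊢
  linear_combination (-(stirling2 n k : ℝ) * x ^ k) * h

theorem geomPoly_succ_eq_deriv (n : ℕ) (r x : ℝ) :
    geomPoly (n + 1) r x = (x ^ 2 + x) * deriv (geomPoly n r) x + r * x * geomPoly n r x := by
  rw [show x ^ 2 + x = (x + 1) * x by ring, mul_assoc, mul_deriv_geomPoly, geomPoly_succ_eq_sum,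
    geomPoly, mul_sum, mul_sum, ← sum_add_distrib]
  refine sum_congr rfl fun k _ => ?_
  rw [ascPochhammer_succ_eval]
  ring

theorem geomPoly_recurrences_general (r : ℝ) (n : ℕ) :
    (∀ x : ℝ, geomPoly (n + 1) r x = r * ((x + 1) * geomPoly n (r + 1) x - geomPoly n r x)) ∧
    (∀ x : ℝ, geomPoly (n + 1) r x =
      (x ^ 2 + x) * deriv (geomPoly n r) x + r * x * geomPoly n r x) ∧
    (∀ x : ℝ, geomPoly (n + 1) 1 x =
      (x ^ 2 + x) * deriv (geomPoly n 1) x + x * geomPoly n 1 x) :=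
  ⟨geomPoly_succ_eq_shift n r, geomPoly_succ_eq_deriv n r, fun x => by
    simpa only [one_mul] using geomPoly_succ_eq_deriv n 1 x⟩

/-- For real `r > 0` and natural `n`, the recurrences
`ω_{n+1,r}(x) = r((x+1) ω_{n,r+1}(x) − ω_{n,r}(x))` and
`ω_{n+1,r}(x) = (x² + x) ω_{n,r}'(x) + r x ω_{n,r}(x)` hold for all real `x`;
in particular, for `r = 1`, `ω_{n+1}(x) = (x² + x) ω_n'(x) + x ω_n(x)`. -/
theorem geomPoly_recurrences (r : ℝ) (hr : 0 < r) (n : ℕ) :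
    (∀ x : ℝ, geomPoly (n + 1) r x = r * ((x + 1) * geomPoly n (r + 1) x - geomPoly n r x)) ∧
    (∀ x : ℝ, geomPoly (n + 1) r x =
      (x ^ 2 + x) * deriv (geomPoly n r) x + r * x * geomPoly n r x) ∧
    (∀ x : ℝ, geomPoly (n + 1) 1 x =
      (x ^ 2 + x) * deriv (geomPoly n 1) x + x * geomPoly n 1 x) :=
  geomPoly_recurrences_general r n
end

section
/- For every real r ≥ 1, every natural number n, and every real x ≠ 0, the binomial transform of the generalized geometric polynomials satisfies Σ_{k=0}^n C(n,k) ω_{k,r}(x) = (1 + 1/x)·ω_{n,r}(x) − (1/x)·ω_{n,r−1}(x), with the convention ω_{n,0}(x) = δ_{n,0}. In particular, for r = 1 and n > 0, Σ_{k=0}^n C(n,k) ω_k(x) = (1 + 1/x)·ω_n(x). -/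
open Finset MeasureTheory Real

lemma stirling2_of_lt : ∀ {n k : ℕ}, n < k → stirling2 n k = 0 := by
  intro n
  induction n with
  | zero => intro k h; cases k with
    | zero => omega
    | succ k => rfl
  | succ n ih =>
    intro k h
    cases k with
    | zero => omega
    | succ k =>
      show (k + 1) * stirling2 n (k + 1) + stirling2 n k = 0
      rw [ih (by omega), ih (by omega)]
      ring

lemma stirling2_binomial (n : ℕ) : ∀ j : ℕ,
    stirling2 (n + 1) (j + 1) = ∑ k ∈ Finset.range (n + 1), n.choose k * stirling2 k j := by
  induction n with
  | zero => intro j; simp [stirling2]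
  | succ n ih =>
    intro j
    rw [Finset.sum_range_succ' (fun k => (n + 1).choose k * stirling2 k j)]
    have hsplit : ∀ i : ℕ, (n + 1).choose (i + 1) * stirling2 (i + 1) j
        = n.choose i * stirling2 (i + 1) j + n.choose (i + 1) * stirling2 (i + 1) j := by
      intro i; rw [Nat.choose_succ_succ]; ring
    simp only [hsplit]
    rw [Finset.sum_add_distrib]
    have hB : (∑ i ∈ Finset.range (n + 1), n.choose (i + 1) * stirling2 (i + 1) j)
        + stirling2 0 j = stirling2 (n + 1) (j + 1) := by
      have h := Finset.sum_range_succ' (fun k => n.choose k * stirling2 k j) (n + 1)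
      rw [Finset.sum_range_succ] at h
      simp only [Nat.choose_succ_self, Nat.zero_mul, add_zero, Nat.choose_zero_right,
        Nat.one_mul] at h
      rw [ih j, h]
    simp only [Nat.choose_zero_right, Nat.one_mul]
    conv_rhs => rw [add_assoc, hB]
    cases j with
    | zero =>
      have hz : ∀ i ∈ Finset.range (n + 1), n.choose i * stirling2 (i + 1) 0 = 0 := by
        intro i _; rfl
      rw [Finset.sum_eq_zero hz]
      show 1 * stirling2 (n + 1) 1 + stirling2 (n + 1) 0 = 0 + stirling2 (n + 1) 1
      cases n <;> simp [stirling2]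
    | succ j =>
      have hrec : ∀ i : ℕ, n.choose i * stirling2 (i + 1) (j + 1)
          = (j + 1) * (n.choose i * stirling2 i (j + 1)) + n.choose i * stirling2 i j := by
        intro i
        show n.choose i * ((j + 1) * stirling2 i (j + 1) + stirling2 i j) = _
        ring
      simp only [hrec]
      rw [Finset.sum_add_distrib, ← Finset.mul_sum, ← ih (j + 1), ← ih j]
      show (j + 1 + 1) * stirling2 (n + 1) (j + 1 + 1) + stirling2 (n + 1) (j + 1) = _
      ring

lemma geomPoly_sum (r x : ℝ) (n : ℕ) :
    ∑ k ∈ Finset.range (n + 1), (n.choose k : ℝ) * geomPoly k r x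
      = ∑ j ∈ Finset.range (n + 1),
          (stirling2 (n + 1) (j + 1) : ℝ) * (ascPochhammer ℝ j).eval r * x ^ j := by
  have h1 : ∀ k ∈ Finset.range (n + 1), (n.choose k : ℝ) * geomPoly k r x
      = ∑ j ∈ Finset.range (n + 1),
          (n.choose k : ℝ) * ((stirling2 k j : ℝ) * (ascPochhammer ℝ j).eval r * x ^ j) := by
    intro k hk
    simp only [Finset.mem_range] at hk
    rw [geomPoly, Finset.mul_sum]
    apply Finset.sum_subset
    · intro j hj
      simp only [Finset.mem_range] at *
      omega
    · intro j _ hj'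
      simp only [Finset.mem_range, not_lt] at hj'
      rw [stirling2_of_lt (by omega : k < j), Nat.cast_zero]
      ring
  rw [Finset.sum_congr rfl h1, Finset.sum_comm]
  refine Finset.sum_congr rfl fun j _ => ?_
  rw [stirling2_binomial]
  push_cast
  rw [Finset.sum_mul, Finset.sum_mul]
  exact Finset.sum_congr rfl fun k _ => by ring

lemma poch_diff (r x : ℝ) (j : ℕ) :
    (ascPochhammer ℝ (j + 1)).eval r - (ascPochhammer ℝ (j + 1)).eval (r - 1)
      = ((j : ℝ) + 1) * (ascPochhammer ℝ j).eval r := by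
  have h1 : (ascPochhammer ℝ (j + 1)).eval r = (ascPochhammer ℝ j).eval r * (r + j) := by
    rw [ascPochhammer_succ_right]; simp
  have h2 : (ascPochhammer ℝ (j + 1)).eval (r - 1) = (r - 1) * (ascPochhammer ℝ j).eval r := by
    rw [ascPochhammer_succ_left]
    simp [Polynomial.eval_comp]
  rw [h1, h2]; ring

lemma geomPoly_diff (r x : ℝ) (n : ℕ) :
    geomPoly n r x - geomPoly n (r - 1) x
      = x * ∑ j ∈ Finset.range n,
          ((j : ℝ) + 1) * (stirling2 n (j + 1) : ℝ) * (ascPochhammer ℝ j).eval r * x ^ j := by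
  rw [geomPoly, geomPoly, ← Finset.sum_sub_distrib,
    Finset.sum_range_succ' (fun m => (stirling2 n m : ℝ) * (ascPochhammer ℝ m).eval r * x ^ m
      - (stirling2 n m : ℝ) * (ascPochhammer ℝ m).eval (r - 1) * x ^ m)]
  simp only [ascPochhammer_zero, Polynomial.eval_one, pow_zero, mul_one, sub_self, add_zero]
  rw [Finset.mul_sum]
  refine Finset.sum_congr rfl fun j _ => ?_
  rw [pow_succ]
  linear_combination ((stirling2 n (j + 1) : ℝ) * x ^ j * x) * poch_diff r x j


/-- For real `r ≥ 1`, natural `n`, and real `x ≠ 0`,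
`Σ_{k=0}^n C(n,k) ω_{k,r}(x) = (1 + 1/x) ω_{n,r}(x) − (1/x) ω_{n,r-1}(x)`
(the convention `ω_{n,0}(x) = δ_{n,0}` holds by definition since `(0)_k = 0` for `k ≥ 1`);
in particular, for `r = 1` and `n > 0`,
`Σ_{k=0}^n C(n,k) ω_k(x) = (1 + 1/x) ω_n(x)`. -/
theorem geomPoly_binomial_transform (r : ℝ) (hr : 1 ≤ r) (n : ℕ) (x : ℝ) (hx : x ≠ 0) :
    (∑ k ∈ Finset.range (n + 1), (Nat.choose n k : ℝ) * geomPoly k r x =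
      (1 + 1 / x) * geomPoly n r x - 1 / x * geomPoly n (r - 1) x) ∧
    (0 < n → ∑ k ∈ Finset.range (n + 1), (Nat.choose n k : ℝ) * geomPoly k 1 x =
      (1 + 1 / x) * geomPoly n 1 x) := by
  have main : ∀ s : ℝ, ∑ k ∈ Finset.range (n + 1), (Nat.choose n k : ℝ) * geomPoly k s x =
      (1 + 1 / x) * geomPoly n s x - 1 / x * geomPoly n (s - 1) x := by
    intro s
    rw [geomPoly_sum]
    have hrhs : (1 + 1 / x) * geomPoly n s x - 1 / x * geomPoly n (s - 1) x
        = geomPoly n s x + (1 / x) * (geomPoly n s x - geomPoly n (s - 1) x) := by ring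
    rw [hrhs, geomPoly_diff s x n]
    have hxx : (1 / x) * (x * ∑ j ∈ Finset.range n,
        ((j : ℝ) + 1) * (stirling2 n (j + 1) : ℝ) * (ascPochhammer ℝ j).eval s * x ^ j)
        = ∑ j ∈ Finset.range n,
        ((j : ℝ) + 1) * (stirling2 n (j + 1) : ℝ) * (ascPochhammer ℝ j).eval s * x ^ j := by
      field_simp
    rw [hxx]
    have hA : ∑ j ∈ Finset.range (n + 1),
        ((j : ℝ) + 1) * (stirling2 n (j + 1) : ℝ) * (ascPochhammer ℝ j).eval s * x ^ j
        = ∑ j ∈ Finset.range n,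
        ((j : ℝ) + 1) * (stirling2 n (j + 1) : ℝ) * (ascPochhammer ℝ j).eval s * x ^ j := by
      rw [Finset.sum_range_succ, stirling2_of_lt (by omega : n < n + 1)]
      simp
    have hdef : ∀ j : ℕ, (stirling2 (n + 1) (j + 1) : ℝ)
        = ((j : ℝ) + 1) * (stirling2 n (j + 1) : ℝ) + (stirling2 n j : ℝ) := by
      intro j
      show ((((j + 1) * stirling2 n (j + 1) + stirling2 n j : ℕ)) : ℝ) = _
      push_cast
      ring
    calc ∑ j ∈ Finset.range (n + 1),
          (stirling2 (n + 1) (j + 1) : ℝ) * (ascPochhammer ℝ j).eval s * x ^ j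
        = ∑ j ∈ Finset.range (n + 1),
          (((j : ℝ) + 1) * (stirling2 n (j + 1) : ℝ) * (ascPochhammer ℝ j).eval s * x ^ j
            + (stirling2 n j : ℝ) * (ascPochhammer ℝ j).eval s * x ^ j) := by
          refine Finset.sum_congr rfl fun j _ => ?_
          rw [hdef j]; ring
      _ = _ := by
          rw [Finset.sum_add_distrib, ← geomPoly, hA]
          ring
  refine ⟨main r, fun hn => ?_⟩
  have h0 : geomPoly n (1 - 1) x = 0 := by
    rw [geomPoly]
    apply Finset.sum_eq_zero
    intro k hk
    cases k with
    | zero =>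
      obtain ⟨m, rfl⟩ := Nat.exists_eq_succ_of_ne_zero hn.ne'
      simp [stirling2]
    | succ k =>
      norm_num [ascPochhammer_eval_zero]
  rw [main 1, h0]
  ring
end
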